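/- Suppose 1 < q < 2 and 0 < b < q−1, or q > 2 and b > q−1. Then the function ψ(k) := 1 + b·k^q − b·k^{q−2} − k^{2q−2} has exactly one zero k_b in the open interval (0,1). -/

import Mathlib

/-!
Put `p = q - 1` and `k = exp (-t)`. Then `ψ(k) = 2 k^p (sinh (p t) - b sinh t)`, so the
zeros of `ψ` in `(0,1)` correspond to the solutions `t > 0` of `sinh (p t) / sinh t = b`.
The derivative of this ratio has the sign of `p - 1`, because `u ↦ sinh u / u` increases on
`(0, ∞)` (`sinh` is convex there and vanishes at `0`). The ratio tends to `p` as `t → 0⁺`, and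
to `0` (if `p < 1`) or `∞` (if `p > 1`) as `t → ∞`, so it takes each value between these limits
exactly once.
-/

open Real Set Filter Topology

namespace Real

theorem strictConvexOn_sinh : StrictConvexOn ℝ (Ici 0) sinh :=
  StrictMonoOn.strictConvexOn_of_deriv (convex_Ici 0) continuous_sinh.continuousOn
    (by rw [deriv_sinh, interior_Ici]; exact cosh_strictMonoOn.mono Ioi_subset_Ici_self)

theorem sinh_div_self_lt_sinh_div_self {a b : ℝ} (ha : a ≠ 0) (hab : |a| < b) :
    sinh a / a < sinh b / b := by
  have key := strictConvexOn_sinh.secant_strict_mono (a := 0) self_mem_Ici (abs_nonneg a)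
    ((abs_nonneg a).trans hab.le) (abs_ne_zero.2 ha) ((abs_nonneg a).trans_lt hab).ne' hab
  simp only [sinh_zero, sub_zero] at key
  rcases abs_choice a with h | h <;> rw [h] at key
  · exact key
  · rwa [sinh_neg, neg_div_neg_eq] at key

theorem two_mul_cosh_mul_sinh_sub (p t : ℝ) :
    2 * (p * cosh (p * t) * sinh t - sinh (p * t) * cosh t) =
      (1 + p) * sinh ((1 - p) * t) - (1 - p) * sinh ((1 + p) * t) := by
  rw [show (1 - p) * t = t - p * t by ring, show (1 + p) * t = t + p * t by ring,
    sinh_sub, sinh_add]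
  ring

theorem sinh_eq_exp_mul (y : ℝ) : sinh y = exp y * ((1 - exp (-(2 * y))) / 2) := by
  rw [sinh_eq, mul_div_assoc', mul_sub, mul_one, ← exp_add]
  ring_nf

theorem sinh_mul_log {k : ℝ} (hk : 0 < k) (c : ℝ) :
    sinh (c * log k) = (k ^ c - (k ^ c)⁻¹) / 2 := by
  rw [sinh_eq, exp_neg, mul_comm, ← rpow_def_of_pos hk]

end Real

noncomputable def sinhRatio (p t : ℝ) : ℝ := sinh (p * t) / sinh t

theorem hasDerivAt_sinhRatio (p : ℝ) {t : ℝ} (ht : t ≠ 0) :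
    HasDerivAt (sinhRatio p)
      ((p * cosh (p * t) * sinh t - sinh (p * t) * cosh t) / sinh t ^ 2) t := by
  have hnum : HasDerivAt (fun t => sinh (p * t)) (cosh (p * t) * p) t :=
    (hasDerivAt_sinh _).comp t ((hasDerivAt_id t).const_mul p |>.congr_deriv (mul_one p))
  exact (hnum.div (hasDerivAt_sinh t) (sinh_ne_zero.2 ht)).congr_deriv (by ring)

theorem sub_one_mul_deriv_sinhRatio_pos {p : ℝ} (hp : 0 < p) (hp1 : p ≠ 1) {t : ℝ}
    (ht : 0 < t) : 0 < (p - 1) * deriv (sinhRatio p) t := by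
  rw [(hasDerivAt_sinhRatio p ht.ne').deriv, mul_div_assoc']
  refine div_pos ?_ (pow_pos (sinh_pos_iff.2 ht) 2)
  set a := (1 - p) * t
  set c := (1 + p) * t
  have ha : a ≠ 0 := mul_ne_zero (sub_ne_zero.2 hp1.symm) ht.ne'
  have hc : 0 < c := by positivity
  have hlt : sinh a / a < sinh c / c := sinh_div_self_lt_sinh_div_self ha (by
    rw [abs_mul, abs_of_pos ht]
    exact mul_lt_mul_of_pos_right (by rw [abs_lt]; constructor <;> linarith) ht)
  have hsplit : (1 + p) * sinh a - (1 - p) * sinh c =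
      (1 - p) * (1 + p) * t * (sinh a / a - sinh c / c) := by
    field_simp
    ring
  calc 0 < (1 - p) ^ 2 * (1 + p) * t * (sinh c / c - sinh a / a) / 2 := by
        have := sub_pos.2 hlt
        positivity
    _ = (p - 1) * ((1 + p) * sinh a - (1 - p) * sinh c) / 2 := by rw [hsplit]; ring
    _ = (p - 1) * (p * cosh (p * t) * sinh t - sinh (p * t) * cosh t) := by
        rw [← two_mul_cosh_mul_sinh_sub]; ring

theorem continuousOn_sinhRatio (p : ℝ) : ContinuousOn (sinhRatio p) (Ioi 0) :=
  fun _ ht => (hasDerivAt_sinhRatio p (ne_of_gt ht)).continuousAt.continuousWithinAt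

theorem strictMonoOn_sinhRatio {p : ℝ} (hp : 1 < p) : StrictMonoOn (sinhRatio p) (Ioi 0) :=
  strictMonoOn_of_deriv_pos (convex_Ioi 0) (continuousOn_sinhRatio p) fun t ht => by
    rw [interior_Ioi] at ht
    exact pos_of_mul_pos_right (sub_one_mul_deriv_sinhRatio_pos (by linarith) hp.ne' ht)
      (by linarith)

theorem strictAntiOn_sinhRatio {p : ℝ} (hp : 0 < p) (hp1 : p < 1) :
    StrictAntiOn (sinhRatio p) (Ioi 0) :=
  strictAntiOn_of_deriv_neg (convex_Ioi 0) (continuousOn_sinhRatio p) fun t ht => by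
    rw [interior_Ioi] at ht
    exact neg_of_mul_pos_right (sub_one_mul_deriv_sinhRatio_pos hp hp1.ne ht) (by linarith)

theorem tendsto_sinhRatio_nhdsNE_zero (p : ℝ) : Tendsto (sinhRatio p) (𝓝[≠] 0) (𝓝 p) := by
  have hnum : HasDerivAt (fun t => sinh (p * t)) p 0 := by
    simpa using ((hasDerivAt_id (0 : ℝ)).const_mul p).sinh
  have hden : HasDerivAt sinh 1 0 := by simpa using hasDerivAt_sinh 0
  have := (hasDerivAt_iff_tendsto_slope.1 hnum).div (hasDerivAt_iff_tendsto_slope.1 hden)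
    one_ne_zero
  rw [div_one] at this
  refine this.congr' (eventually_nhdsWithin_of_forall fun t ht => ?_)
  simp only [Pi.div_apply, slope_def_field, mul_zero, sinh_zero, sub_zero, sinhRatio]
  exact div_div_div_cancel_right₀ ht _ _

theorem sinhRatio_eq_exp_mul (p t : ℝ) :
    sinhRatio p t = exp ((p - 1) * t) * ((1 - exp (-(2 * (p * t)))) / (1 - exp (-(2 * t)))) := by
  rw [sinhRatio, sinh_eq_exp_mul, sinh_eq_exp_mul, mul_div_mul_comm, sub_one_mul, exp_sub,
    div_div_div_cancel_right₀ two_ne_zero]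

theorem tendsto_one_sub_exp_div_one_sub_exp {p : ℝ} (hp : 0 < p) :
    Tendsto (fun t => (1 - exp (-(2 * (p * t)))) / (1 - exp (-(2 * t)))) atTop (𝓝 1) := by
  have h (c : ℝ) (hc : 0 < c) : Tendsto (fun t => 1 - exp (-(2 * (c * t)))) atTop (𝓝 1) := by
    simpa using (tendsto_exp_neg_atTop_nhds_zero.comp
      ((tendsto_id.const_mul_atTop hc).const_mul_atTop two_pos)).const_sub 1
  simpa only [one_mul, div_one, Pi.div_def] using (h p hp).div (h 1 one_pos) one_ne_zero

theorem tendsto_sinhRatio_atTop_of_lt_one {p : ℝ} (hp : 0 < p) (hp1 : p < 1) :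
    Tendsto (sinhRatio p) atTop (𝓝 0) := by
  have hexp : Tendsto (fun t => exp ((p - 1) * t)) atTop (𝓝 0) :=
    tendsto_exp_atBot.comp (tendsto_id.const_mul_atTop_of_neg (by linarith))
  simpa using (hexp.mul (tendsto_one_sub_exp_div_one_sub_exp hp)).congr
    fun t => (sinhRatio_eq_exp_mul p t).symm

theorem tendsto_sinhRatio_atTop_of_one_lt {p : ℝ} (hp1 : 1 < p) :
    Tendsto (sinhRatio p) atTop atTop :=
  (((tendsto_exp_atTop.comp (tendsto_id.const_mul_atTop (by linarith))).atTop_mul_pos one_pos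
    (tendsto_one_sub_exp_div_one_sub_exp (by linarith)))).congr
    fun t => (sinhRatio_eq_exp_mul p t).symm

theorem existsUnique_sinhRatio_eq {p b : ℝ}
    (h : (0 < p ∧ p < 1 ∧ 0 < b ∧ b < p) ∨ (1 < p ∧ p < b)) :
    ∃! t, t ∈ Ioi 0 ∧ sinhRatio p t = b := by
  have hle_zero : 𝓝[>] (0 : ℝ) ≤ 𝓟 (Ioi 0) := inf_le_right
  have hle_atTop : atTop ≤ 𝓟 (Ioi (0 : ℝ)) := le_principal_iff.2 (Ioi_mem_atTop 0)
  have hlim_zero := (tendsto_sinhRatio_nhdsNE_zero p).mono_left (nhdsGT_le_nhdsNE 0)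
  have hconn : IsPreconnected (Ioi (0 : ℝ)) := isPreconnected_Ioi
  obtain ⟨⟨t, ht, hbt⟩, hinj⟩ :
      b ∈ sinhRatio p '' Ioi 0 ∧ InjOn (sinhRatio p) (Ioi 0) := by
    rcases h with ⟨hp, hp1, hb, hbp⟩ | ⟨hp1, hpb⟩
    · exact ⟨hconn.intermediate_value_Ioo hle_atTop hle_zero (continuousOn_sinhRatio p)
        (tendsto_sinhRatio_atTop_of_lt_one hp hp1) hlim_zero ⟨hb, hbp⟩,
        (strictAntiOn_sinhRatio hp hp1).injOn⟩
    · exact ⟨hconn.intermediate_value_Ioi hle_zero hle_atTop (continuousOn_sinhRatio p) hlim_zero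
        (tendsto_sinhRatio_atTop_of_one_lt hp1) hpb, (strictMonoOn_sinhRatio hp1).injOn⟩
  exact ⟨t, ⟨ht, hbt⟩, fun u hu => hinj hu.1 ht (hu.2.trans hbt.symm)⟩

noncomputable def psi (b q k : ℝ) : ℝ := 1 + b * k ^ q - b * k ^ (q - 2) - k ^ (2 * q - 2)

theorem psi_eq_mul_sinh (b q : ℝ) {k : ℝ} (hk : 0 < k) :
    psi b q k = 2 * k ^ (q - 1) * (sinh ((q - 1) * -log k) - b * sinh (-log k)) := by
  have hq : k ^ q = k ^ (q - 1) * k := by rw [← rpow_add_one hk.ne', sub_add_cancel]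
  have hq2 : k ^ (q - 2) = k ^ (q - 1) / k := by rw [← rpow_sub_one hk.ne']; ring_nf
  have h2q : k ^ (2 * q - 2) = (k ^ (q - 1)) ^ 2 := by
    rw [← rpow_natCast, ← rpow_mul hk.le]; ring_nf
  rw [psi, mul_neg, sinh_neg, sinh_neg, sinh_mul_log hk, ← one_mul (log k), sinh_mul_log hk,
    rpow_one, hq, hq2, h2q]
  have : 0 < k ^ (q - 1) := rpow_pos_of_pos hk _
  field_simp
  ring

theorem psi_eq_zero_iff {b q k : ℝ} (hk : k ∈ Ioo (0 : ℝ) 1) :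
    psi b q k = 0 ↔ sinhRatio (q - 1) (-log k) = b := by
  have hsinh : 0 < sinh (-log k) := sinh_pos_iff.2 (neg_pos.2 (log_neg hk.1 hk.2))
  have hpow : 0 < 2 * k ^ (q - 1) := mul_pos two_pos (rpow_pos_of_pos hk.1 _)
  rw [psi_eq_mul_sinh b q hk.1, mul_eq_zero, or_iff_right hpow.ne', sinhRatio,
    div_eq_iff hsinh.ne', sub_eq_zero]

theorem psi_unique_zero (b q : ℝ)
    (h : (1 < q ∧ q < 2 ∧ 0 < b ∧ b < q - 1) ∨ (2 < q ∧ q - 1 < b)) :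
    ∃! k : ℝ, k ∈ Set.Ioo (0:ℝ) 1 ∧
      1 + b * k ^ q - b * k ^ (q - 2) - k ^ (2 * q - 2) = 0 := by
  obtain ⟨t, ⟨ht, hbt⟩, huniq⟩ := existsUnique_sinhRatio_eq (p := q - 1) (by
    rcases h with ⟨hq, hq2, hb, hbq⟩ | ⟨hq, hqb⟩
    · exact Or.inl ⟨by linarith, by linarith, hb, hbq⟩
    · exact Or.inr ⟨by linarith, hqb⟩)
  have hk : exp (-t) ∈ Ioo (0 : ℝ) 1 := ⟨exp_pos _, exp_lt_one_iff.2 (neg_neg_of_pos ht)⟩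
  refine ⟨exp (-t), ⟨hk, (psi_eq_zero_iff hk).2 (by rwa [log_exp, neg_neg])⟩, ?_⟩
  rintro k ⟨hk, hψ⟩
  have hlog : 0 < -log k := neg_pos.2 (log_neg hk.1 hk.2)
  rw [← huniq (-log k) ⟨hlog, (psi_eq_zero_iff hk).1 hψ⟩, neg_neg, exp_log hk.1]
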